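/- Let {F_t} be the flow built under a positive measurable ceiling function ξ : X₀ → ℝ with base automorphism T on (X₀,𝔅₀,μ₀). Then {F_t} has Property B if and only if there exists a measurable set A₀ ⊆ X₀ of positive measure such that for all δ > 0, limsup_{s→∞} μ₀(Δ_{F,δ,s}(A₀)) = 0, where Δ_{F,δ,s}(A₀) = {x ∈ A₀ : ∃ t ∈ (e^{s-δ},e^{s+δ}) ∪ (−e^{s+δ},−e^{s-δ}), F_t(x,0) ∈ A₀ × {0}}. -/

import Mathlib

open MeasureTheory Filter Set
open scoped ENNReal

/-- The return set `Λ_{F,δ,s}(A)` of a flow `F`. -/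
def lamSet {X : Type*} (F : ℝ → X → X) (A : Set X) (δ s : ℝ) : Set X :=
  {x | x ∈ A ∧ ∃ t : ℝ, Real.exp (s - δ) < |t| ∧ |t| < Real.exp (s + δ) ∧ F t x ∈ A}

/-- Property B of a flow `F` on a measure space `(X, μ)`. -/
def PropertyB {X : Type*} [MeasurableSpace X] (μ : Measure X) (F : ℝ → X → X) : Prop :=
  ∃ A : Set X, MeasurableSet A ∧ 0 < μ A ∧
    ∀ δ : ℝ, 0 < δ → limsup (fun s : ℝ => μ (lamSet F A δ s)) atTop = 0

/-- The base return set `Δ_{F,δ,s}(A₀)` for a flow built under a function: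
points of `A₀` that return to `A₀ × {0}` at some time `t` with `e^{s-δ} < |t| < e^{s+δ}`. -/
def delSet {X₀ : Type*} (F : ℝ → X₀ × ℝ → X₀ × ℝ) (A₀ : Set X₀) (δ s : ℝ) : Set X₀ :=
  {x | x ∈ A₀ ∧ ∃ t : ℝ, Real.exp (s - δ) < |t| ∧ |t| < Real.exp (s + δ) ∧
    (F t (x, 0)).1 ∈ A₀ ∧ (F t (x, 0)).2 = 0}

/-! Both directions compare return sets on the base with return sets in the tower `Y`.

If `A ⊆ Y` has Property B, Lebesgue density in the vertical fibres gives rationals `u, h` and a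
base set `A₀` of positive measure on which the fibres of `A` fill two thirds of `[u, u + h)`. When
`x ∈ A₀` returns to `A₀ × {0}` at time `t`, the whole column above `x` is carried along, and the
fibres over `x` and over the return point overlap in measure at least `h / 3`; every point of that
overlap is in `Λ_{F,δ,s}(A)` with the same `t`. Fubini then gives `μ₀ Δ ≤ (3 / h) ν Λ`.

Conversely, shrink `A₀` to where `ξ ≥ ε` and take the strip `A = A₀ × [0, ε)`. A return of
`(x, v)` to `A` at time `t` gives a return of `(x, 0)` to `A₀ × {0}` at a time within `ε` of `t`,
which lies in the `2δ`-window once `s` is large, so `ν Λ_{F,δ,s}(A) ≤ ε μ₀ Δ_{F,2δ,s}(A₀)`. -/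

lemma limsup_eq_zero_of_eventually_le_mul {α : Type*} {f : Filter α} {u v : α → ℝ≥0∞}
    {c : ℝ≥0∞} (hc : c ≠ ⊤) (hv : limsup v f = 0) (huv : ∀ᶠ x in f, u x ≤ v x * c) :
    limsup u f = 0 :=
  le_antisymm
    (calc limsup u f ≤ limsup (fun x => v x * c) f := limsup_le_limsup huv
      _ = c * limsup v f := ENNReal.limsup_mul_const_of_ne_top hc
      _ = 0 := by rw [hv, mul_zero])
    zero_le

lemma tendsto_exp_add_sub_exp_add_atTop {a b : ℝ} (hba : b < a) :
    Tendsto (fun s => Real.exp (s + a) - Real.exp (s + b)) atTop atTop := by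
  have hexp : (fun s => Real.exp (s + a) - Real.exp (s + b))
      = fun s => Real.exp s * (Real.exp a - Real.exp b) := by
    ext s
    rw [Real.exp_add, Real.exp_add]
    ring
  rw [hexp]
  exact Real.tendsto_exp_atTop.atTop_mul_const (sub_pos.2 (Real.exp_lt_exp.2 hba))

lemma measure_add_measure_le_measure_inter_add {α : Type*} [MeasurableSpace α] {μ : Measure α}
    {a b s : Set α} (hb : MeasurableSet b) (has : a ⊆ s) (hbs : b ⊆ s) :
    μ a + μ b ≤ μ (a ∩ b) + μ s := by
  rw [← measure_union_add_inter a hb, add_comm]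
  exact add_le_add_right (measure_mono (union_subset has hbs)) _

lemma exists_pos_measure_inter_setOf_le {α : Type*} [MeasurableSpace α] {μ : Measure α}
    {A : Set α} {ξ : α → ℝ} (hξ : ∀ x, 0 < ξ x) (hA : 0 < μ A) :
    ∃ ε > 0, 0 < μ (A ∩ {x | ε ≤ ξ x}) := by
  have hcover : A ⊆ ⋃ n : ℕ, A ∩ {x | 1 / (n + 1 : ℝ) ≤ ξ x} := fun x hx =>
    mem_iUnion.2 ⟨(exists_nat_one_div_lt (hξ x)).choose, hx,
      (exists_nat_one_div_lt (hξ x)).choose_spec.le⟩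
  obtain ⟨n, hn⟩ := exists_measure_pos_of_not_measure_iUnion_null
    fun h => hA.ne' (measure_mono_null hcover h)
  exact ⟨1 / (n + 1 : ℝ), by positivity, hn⟩

namespace MeasureTheory.Measure

lemma measure_mul_le_prod_of_le_measure_preimage_mk {α β : Type*} [MeasurableSpace α]
    [MeasurableSpace β] {μ : Measure α} {ν : Measure β} [SFinite ν] {E : Set α}
    {L : Set (α × β)} {c : ℝ≥0∞} (hc : ∀ x ∈ E, c ≤ ν (Prod.mk x ⁻¹' L)) :
    μ E * c ≤ μ.prod ν L := by
  set L' := toMeasurable (μ.prod ν) L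
  have hL' : MeasurableSet L' := measurableSet_toMeasurable _ _
  have hE : E ⊆ {x | c ≤ ν (Prod.mk x ⁻¹' L')} := fun x hx =>
    (hc x hx).trans (measure_mono (preimage_mono (subset_toMeasurable _ _)))
  calc μ E * c ≤ c * μ {x | c ≤ ν (Prod.mk x ⁻¹' L')} := by
        rw [mul_comm]; exact mul_le_mul_right (measure_mono hE) c
    _ ≤ ∫⁻ x, ν (Prod.mk x ⁻¹' L') ∂μ :=
        mul_meas_ge_le_lintegral (measurable_measure_prodMk_left hL') c
    _ = μ.prod ν L := by rw [← prod_apply hL', measure_toMeasurable]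

end MeasureTheory.Measure

lemma Real.exists_rat_Ico_le_volume_inter {s : Set ℝ} (hs : 0 < volume s) :
    ∃ u h : ℚ, 0 < h ∧ ENNReal.ofReal (2 * h / 3) ≤ volume (s ∩ Ico (u : ℝ) (u + h)) := by
  obtain ⟨x, hx⟩ := ((ae_neBot (μ := volume.restrict s)).2
    (by simpa using hs.ne')).nonempty_of_mem (Besicovitch.ae_tendsto_measure_inter_div volume s)
  have h34 : ENNReal.ofReal (3 / 4) < 1 := ENNReal.ofReal_lt_one.2 (by norm_num)
  obtain ⟨r, hratio, hr⟩ := ((hx.eventually (eventually_gt_nhds h34)).and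
    self_mem_nhdsWithin).exists
  have hr : (0 : ℝ) < r := hr
  have hball : volume (Metric.closedBall x r) = ENNReal.ofReal (2 * r) :=
    Real.volume_closedBall x r
  have hdense : ENNReal.ofReal (3 * r / 2) < volume (s ∩ Metric.closedBall x r) := by
    rw [hball, ENNReal.lt_div_iff_mul_lt (by simp [hr]) (by simp),
      ← ENNReal.ofReal_mul (by norm_num)] at hratio
    convert hratio using 2
    ring
  -- enclose `[x - r, x + r]` in `[u, u + h)` with `h < 9r/4`, so that `2h/3 < 3r/2`
  obtain ⟨u, hu₁, hu₂⟩ := exists_rat_btwn (show x - r - r / 8 < x - r by linarith)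
  obtain ⟨h, hh₁, hh₂⟩ := exists_rat_btwn (show 2 * r + r / 8 < 2 * r + r / 4 by linarith)
  have hsub : Metric.closedBall x r ⊆ Ico (u : ℝ) (u + h) := by
    rw [Real.closedBall_eq_Icc]
    exact Icc_subset_Ico hu₂.le (by linarith)
  refine ⟨u, h, by exact_mod_cast (show (0 : ℝ) < h by linarith), ?_⟩
  calc ENNReal.ofReal (2 * h / 3) ≤ ENNReal.ofReal (3 * r / 2) :=
        ENNReal.ofReal_le_ofReal (by linarith)
    _ ≤ volume (s ∩ Metric.closedBall x r) := hdense.le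
    _ ≤ volume (s ∩ Ico (u : ℝ) (u + h)) := measure_mono (inter_subset_inter_right _ hsub)

lemma lamSet_mono {X : Type*} (F : ℝ → X → X) {A A' : Set X} (hAA' : A ⊆ A') (δ s : ℝ) :
    lamSet F A δ s ⊆ lamSet F A' δ s :=
  fun _ ⟨hy, t, ht₁, ht₂, hFt⟩ => ⟨hAA' hy, t, ht₁, ht₂, hAA' hFt⟩

section SuspensionFlow

variable {X₀ : Type*} {ξ : X₀ → ℝ} {F : ℝ → X₀ × ℝ → X₀ × ℝ}

def underGraph (ξ : X₀ → ℝ) : Set (X₀ × ℝ) := {p | 0 ≤ p.2 ∧ p.2 < ξ p.1}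

def MovesVerticallyUnder (ξ : X₀ → ℝ) (F : ℝ → X₀ × ℝ → X₀ × ℝ) : Prop :=
  ∀ (x : X₀) (u t : ℝ), 0 ≤ u → 0 ≤ u + t → u + t < ξ x → F t (x, u) = (x, u + t)

lemma measurableSet_underGraph [MeasurableSpace X₀] (hξ : Measurable ξ) :
    MeasurableSet (underGraph ξ) :=
  (measurableSet_le measurable_const measurable_snd).inter
    (measurableSet_lt measurable_snd (hξ.comp measurable_fst))

lemma flow_apply_floor (hloc : MovesVerticallyUnder ξ F) {x : X₀} {v : ℝ} (hv : 0 ≤ v)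
    (hvx : v < ξ x) : F v (x, 0) = (x, v) := by
  simpa using hloc x 0 v le_rfl (by simpa using hv) (by simpa using hvx)

lemma flow_neg_height (hloc : MovesVerticallyUnder ξ F) {p : X₀ × ℝ} (hp : p ∈ underGraph ξ) :
    F (-p.2) p = (p.1, 0) := by
  simpa using hloc p.1 p.2 (-p.2) hp.1 (by simp) (by linarith [hp.1, hp.2])

lemma flow_apply_of_flow_floor
    (hloc : MovesVerticallyUnder ξ F) (hFadd : ∀ s t : ℝ, ∀ y, F (s + t) y = F s (F t y))
    {x x' : X₀} {t v : ℝ} (ht : F t (x, 0) = (x', 0)) (hv : 0 ≤ v) (hvx : v < ξ x)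
    (hvx' : v < ξ x') : F t (x, v) = (x', v) := by
  rw [← flow_apply_floor hloc hv hvx, ← hFadd, add_comm, hFadd, ht, flow_apply_floor hloc hv hvx']

lemma flow_floor_of_flow
    (hloc : MovesVerticallyUnder ξ F) (hFadd : ∀ s t : ℝ, ∀ y, F (s + t) y = F s (F t y))
    {x : X₀} {t v : ℝ} (hv : 0 ≤ v) (hvx : v < ξ x) (hp : F t (x, v) ∈ underGraph ξ) :
    F (-(F t (x, v)).2 + (t + v)) (x, 0) = ((F t (x, v)).1, 0) := by
  rw [hFadd, hFadd, flow_apply_floor hloc hv hvx, flow_neg_height hloc hp]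

lemma delSet_mono (F : ℝ → X₀ × ℝ → X₀ × ℝ) {A₀ A₀' : Set X₀} (hA : A₀ ⊆ A₀') (δ s : ℝ) :
    delSet F A₀ δ s ⊆ delSet F A₀' δ s :=
  fun _ ⟨hx, t, ht₁, ht₂, hFt, hFt0⟩ => ⟨hA hx, t, ht₁, ht₂, hA hFt, hFt0⟩

lemma lamSet_prod_Ico_subset
    (hloc : MovesVerticallyUnder ξ F) (hFadd : ∀ s t : ℝ, ∀ y, F (s + t) y = F s (F t y))
    {A₀ : Set X₀} {ε δ δ' s : ℝ} (hε : ∀ x ∈ A₀, ε ≤ ξ x)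
    (hlow : ε ≤ Real.exp (s - δ) - Real.exp (s - δ'))
    (hhigh : ε ≤ Real.exp (s + δ') - Real.exp (s + δ)) :
    lamSet F (A₀ ×ˢ Ico 0 ε) δ s ⊆ delSet F A₀ δ' s ×ˢ Ico 0 ε := by
  rintro ⟨x, v⟩ ⟨⟨hx, hv⟩, t, ht₁, ht₂, hp, hp'⟩
  have hret := flow_floor_of_flow hloc hFadd hv.1 (hv.2.trans_le (hε x hx))
    ⟨hp'.1, hp'.2.trans_le (hε _ hp)⟩
  set t' := -(F t (x, v)).2 + (t + v)
  have hclose : |t' - t| < ε := abs_lt.2 ⟨by linarith [hp'.2, hv.1], by linarith [hp'.1, hv.2]⟩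
  refine ⟨⟨hx, t', ?_, ?_, by rw [hret]; exact hp, by rw [hret]⟩, hv⟩
  · linarith [abs_sub_abs_le_abs_sub t t', abs_sub_comm t t']
  · linarith [abs_sub_abs_le_abs_sub t' t]

end SuspensionFlow

section Forward

variable {X₀ : Type*} [MeasurableSpace X₀] {ξ : X₀ → ℝ} {F : ℝ → X₀ × ℝ → X₀ × ℝ}

def denseFibreSet (B : Set (X₀ × ℝ)) (u h : ℝ) : Set X₀ :=
  {x | ENNReal.ofReal (2 * h / 3) ≤ volume (Prod.mk x ⁻¹' B ∩ Ico u (u + h))}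

lemma measurableSet_denseFibreSet {B : Set (X₀ × ℝ)} (hB : MeasurableSet B) (u h : ℝ) :
    MeasurableSet (denseFibreSet B u h) := by
  have hfibre : Measurable fun x => volume (Prod.mk x ⁻¹' B ∩ Ico u (u + h)) := by
    simp_rw [← Measure.restrict_apply (measurable_prodMk_left hB)]
    exact measurable_measure_prodMk_left hB
  exact measurableSet_le measurable_const hfibre

lemma exists_pos_measure_denseFibreSet {μ₀ : Measure X₀} {B : Set (X₀ × ℝ)}
    (hB : MeasurableSet B) (hpos : 0 < μ₀.prod volume B) :
    ∃ u h : ℚ, 0 < h ∧ 0 < μ₀ (denseFibreSet B u h) := by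
  by_contra! hnull
  have hae : ∀ᵐ x ∂μ₀, ∀ u h : ℚ, 0 < h → x ∉ denseFibreSet B u h := by
    refine ae_all_iff.2 fun u => ae_all_iff.2 fun h => ?_
    by_cases hh : 0 < h
    · filter_upwards [measure_eq_zero_iff_ae_notMem.1 (nonpos_iff_eq_zero.1 (hnull u h hh))]
        with x hx _ using hx
    · exact Eventually.of_forall fun x hh' => absurd hh' hh
  refine hpos.ne' (Measure.measure_prod_null_of_ae_null hB ?_)
  filter_upwards [hae] with x hx
  by_contra hfibre
  obtain ⟨u, h, hh, hdense⟩ := Real.exists_rat_Ico_le_volume_inter (pos_iff_ne_zero.2 hfibre)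
  exact hx u h hh hdense

lemma le_volume_inter_of_mem_denseFibreSet {B : Set (X₀ × ℝ)} (hB : MeasurableSet B)
    {u h : ℝ} (hh : 0 < h) {x x' : X₀} (hx : x ∈ denseFibreSet B u h)
    (hx' : x' ∈ denseFibreSet B u h) :
    ENNReal.ofReal (h / 3) ≤ volume ((Prod.mk x ⁻¹' B ∩ Ico u (u + h)) ∩
      (Prod.mk x' ⁻¹' B ∩ Ico u (u + h))) := by
  have hsum := (add_le_add hx hx').trans (measure_add_measure_le_measure_inter_add
    ((measurable_prodMk_left hB).inter measurableSet_Ico) inter_subset_right inter_subset_right)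
  rw [Real.volume_Ico, add_sub_cancel_left, ← ENNReal.ofReal_add (by positivity) (by positivity),
    show 2 * h / 3 + 2 * h / 3 = h / 3 + h by ring,
    ENNReal.ofReal_add (by positivity) hh.le] at hsum
  exact (ENNReal.add_le_add_iff_right ENNReal.ofReal_ne_top).1 hsum

lemma measure_delSet_denseFibreSet_mul_le
    (hloc : MovesVerticallyUnder ξ F) (hFadd : ∀ s t : ℝ, ∀ y, F (s + t) y = F s (F t y))
    {μ₀ : Measure X₀} {B : Set (X₀ × ℝ)} (hB : MeasurableSet B) (hBY : B ⊆ underGraph ξ)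
    {u h : ℝ} (hh : 0 < h) (δ s : ℝ) :
    μ₀ (delSet F (denseFibreSet B u h) δ s) * ENNReal.ofReal (h / 3) ≤
      μ₀.prod volume (lamSet F B δ s) := by
  refine Measure.measure_mul_le_prod_of_le_measure_preimage_mk
    fun x ⟨hx, t, ht₁, ht₂, hx', hx'0⟩ => ?_
  refine (le_volume_inter_of_mem_denseFibreSet hB hh hx hx').trans (measure_mono ?_)
  rintro v ⟨⟨hxv, -⟩, hx'v, -⟩
  have hF : F t (x, 0) = ((F t (x, 0)).1, 0) := Prod.ext rfl hx'0
  refine ⟨hxv, t, ht₁, ht₂, ?_⟩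
  rw [flow_apply_of_flow_floor hloc hFadd hF (hBY hxv).1 (hBY hxv).2 (hBY hx'v).2]
  exact hx'v

theorem exists_delSet_of_propertyB (hξ : Measurable ξ)
    (hloc : MovesVerticallyUnder ξ F) (hFadd : ∀ s t : ℝ, ∀ y, F (s + t) y = F s (F t y))
    {μ₀ : Measure X₀} (hB : PropertyB ((μ₀.prod volume).restrict (underGraph ξ)) F) :
    ∃ A₀ : Set X₀, MeasurableSet A₀ ∧ 0 < μ₀ A₀ ∧
      ∀ δ : ℝ, 0 < δ → limsup (fun s : ℝ => μ₀ (delSet F A₀ δ s)) atTop = 0 := by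
  obtain ⟨A, hA, hApos, hreturn⟩ := hB
  have hY := measurableSet_underGraph hξ
  have hB : MeasurableSet (A ∩ underGraph ξ) := hA.inter hY
  rw [Measure.restrict_apply hA] at hApos
  obtain ⟨u, h, hh, hpos⟩ := exists_pos_measure_denseFibreSet hB hApos
  have hc : ENNReal.ofReal (h / 3) ≠ 0 := (ENNReal.ofReal_pos.2 (by positivity)).ne'
  refine ⟨_, measurableSet_denseFibreSet hB u h, hpos, fun δ hδ => ?_⟩
  refine limsup_eq_zero_of_eventually_le_mul (ENNReal.inv_ne_top.2 hc) (hreturn δ hδ)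
    (Eventually.of_forall fun s => ?_)
  rw [← div_eq_mul_inv, ENNReal.le_div_iff_mul_le (Or.inl hc) (Or.inl ENNReal.ofReal_ne_top)]
  calc _ ≤ μ₀.prod volume (lamSet F (A ∩ underGraph ξ) δ s) :=
        measure_delSet_denseFibreSet_mul_le hloc hFadd hB inter_subset_right
          (by exact_mod_cast hh) δ s
    _ = (μ₀.prod volume).restrict (underGraph ξ) (lamSet F (A ∩ underGraph ξ) δ s) := by
        have hsub : lamSet F (A ∩ underGraph ξ) δ s ⊆ underGraph ξ := fun _ hy => hy.1.2
        rw [Measure.restrict_apply' hY, inter_eq_left.2 hsub]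
    _ ≤ _ := measure_mono (lamSet_mono F inter_subset_left δ s)

end Forward

section Backward

variable {X₀ : Type*} [MeasurableSpace X₀] {ξ : X₀ → ℝ} {F : ℝ → X₀ × ℝ → X₀ × ℝ}

theorem propertyB_of_exists_delSet
    (hξpos : ∀ x, 0 < ξ x) (hξ : Measurable ξ)
    (hloc : MovesVerticallyUnder ξ F) (hFadd : ∀ s t : ℝ, ∀ y, F (s + t) y = F s (F t y))
    {μ₀ : Measure X₀}
    (h : ∃ A₀ : Set X₀, MeasurableSet A₀ ∧ 0 < μ₀ A₀ ∧
      ∀ δ : ℝ, 0 < δ → limsup (fun s : ℝ => μ₀ (delSet F A₀ δ s)) atTop = 0) :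
    PropertyB ((μ₀.prod volume).restrict (underGraph ξ)) F := by
  obtain ⟨A₀, hA₀, hA₀pos, hreturn⟩ := h
  obtain ⟨ε, hε, hpos⟩ := exists_pos_measure_inter_setOf_le hξpos hA₀pos
  have hstrip : (A₀ ∩ {x | ε ≤ ξ x}) ×ˢ Ico 0 ε ⊆ underGraph ξ :=
    fun _ ⟨hx, hv⟩ => ⟨hv.1, hv.2.trans_le hx.2⟩
  refine ⟨(A₀ ∩ {x | ε ≤ ξ x}) ×ˢ Ico 0 ε,
    (hA₀.inter (measurableSet_le measurable_const hξ)).prod measurableSet_Ico, ?_, fun δ hδ => ?_⟩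
  · rw [Measure.restrict_apply' (measurableSet_underGraph hξ), inter_eq_left.2 hstrip,
      Measure.prod_prod, Real.volume_Ico, sub_zero]
    exact ENNReal.mul_pos hpos.ne' (ENNReal.ofReal_pos.2 hε).ne'
  have hwindow : ∀ᶠ s in atTop, ε ≤ Real.exp (s - δ) - Real.exp (s - 2 * δ) ∧
      ε ≤ Real.exp (s + 2 * δ) - Real.exp (s + δ) := by
    filter_upwards [(tendsto_exp_add_sub_exp_add_atTop (a := -δ) (b := -(2 * δ))
        (by linarith)).eventually_ge_atTop ε,
      (tendsto_exp_add_sub_exp_add_atTop (a := 2 * δ) (b := δ)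
        (by linarith)).eventually_ge_atTop ε] with s hlow hhigh
    simp only [← sub_eq_add_neg] at hlow
    exact ⟨hlow, hhigh⟩
  refine limsup_eq_zero_of_eventually_le_mul (ENNReal.ofReal_ne_top (r := ε))
    (hreturn (2 * δ) (by positivity)) ?_
  filter_upwards [hwindow] with s ⟨hlow, hhigh⟩
  calc _ ≤ μ₀.prod volume (lamSet F ((A₀ ∩ {x | ε ≤ ξ x}) ×ˢ Ico 0 ε) δ s) :=
        Measure.restrict_le_self _
    _ ≤ μ₀.prod volume (delSet F A₀ (2 * δ) s ×ˢ Ico 0 ε) :=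
        measure_mono ((lamSet_prod_Ico_subset hloc hFadd (fun _ hx => hx.2) hlow hhigh).trans
          (prod_mono (delSet_mono F inter_subset_left _ _) subset_rfl))
    _ = μ₀ (delSet F A₀ (2 * δ) s) * ENNReal.ofReal ε := by
        rw [Measure.prod_prod, Real.volume_Ico, sub_zero]

end Backward

theorem stmt_3_general {X₀ : Type*} [MeasurableSpace X₀] (μ₀ : Measure X₀)
    (ξ : X₀ → ℝ) (hξpos : ∀ x, 0 < ξ x) (hξm : Measurable ξ)
    (F : ℝ → X₀ × ℝ → X₀ × ℝ)
    (hFadd : ∀ s t : ℝ, ∀ y, F (s + t) y = F s (F t y))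
    (hloc : ∀ (x : X₀) (u t : ℝ), 0 ≤ u → 0 ≤ u + t → u + t < ξ x → F t (x, u) = (x, u + t)) :
    PropertyB ((μ₀.prod volume).restrict {p : X₀ × ℝ | 0 ≤ p.2 ∧ p.2 < ξ p.1}) F ↔
      ∃ A₀ : Set X₀, MeasurableSet A₀ ∧ 0 < μ₀ A₀ ∧
        ∀ δ : ℝ, 0 < δ → limsup (fun s : ℝ => μ₀ (delSet F A₀ δ s)) atTop = 0 :=
  ⟨exists_delSet_of_propertyB hξm hloc hFadd, propertyB_of_exists_delSet hξpos hξm hloc hFadd⟩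

theorem stmt_3 {X₀ : Type*} [MeasurableSpace X₀] (μ₀ : Measure X₀) [SigmaFinite μ₀]
    (T : X₀ → X₀) (hT : Measurable T)
    (ξ : X₀ → ℝ) (hξpos : ∀ x, 0 < ξ x) (hξm : Measurable ξ)
    (F : ℝ → X₀ × ℝ → X₀ × ℝ)
    (hFmeas : Measurable (fun p : ℝ × (X₀ × ℝ) => F p.1 p.2))
    (hF0 : ∀ y, F 0 y = y)
    (hFadd : ∀ s t : ℝ, ∀ y, F (s + t) y = F s (F t y))
    (hloc : ∀ (x : X₀) (u t : ℝ), 0 ≤ u → 0 ≤ u + t → u + t < ξ x → F t (x, u) = (x, u + t))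
    (hjump : ∀ x : X₀, F (ξ x) (x, 0) = (T x, 0)) :
    PropertyB ((μ₀.prod volume).restrict {p : X₀ × ℝ | 0 ≤ p.2 ∧ p.2 < ξ p.1}) F ↔
      ∃ A₀ : Set X₀, MeasurableSet A₀ ∧ 0 < μ₀ A₀ ∧
        ∀ δ : ℝ, 0 < δ → limsup (fun s : ℝ => μ₀ (delSet F A₀ δ s)) atTop = 0 :=
  stmt_3_general μ₀ ξ hξpos hξm F hFadd hloc
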